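/- arXiv:2405.20083 — 3 statements merged into one kernel-verified Lean document; each statement's English description precedes it below -/
import Mathlib

section
/- The quicksort recurrence t_m(n), defined by t_m(0) = 0 and t_m(n) = m·n + (2/n)·∑_{i=0}^{n-1} t_m(i) for n > 0 and a constant m ≥ 0, satisfies t_m(n) ≤ (n+1) · ∑_{i=1}^{n} 2m/(i+1) for all n. -/
lemma quicksort_sum_B (m : ℝ) : ∀ n : ℕ,
    ∑ i ∈ Finset.range (n+1), (((i:ℝ)+1) * ∑ j ∈ Finset.Icc 1 i, 2*m/((j:ℝ)+1))
      = ((n:ℝ)+1)*((n:ℝ)+2)/2 * (∑ j ∈ Finset.Icc 1 n, 2*m/((j:ℝ)+1))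
        - m*(n:ℝ)*((n:ℝ)+1)/2 := by
  intro n
  induction n with
  | zero => simp
  | succ k ih =>
      rw [Finset.sum_range_succ, ih,
        Finset.sum_Icc_succ_top (by omega : 1 ≤ k+1)]
      push_cast
      field_simp
      ring

/-- The quicksort recurrence t_m(n) satisfies
t_m(n) ≤ (n+1) · ∑_{i=1}^n 2m/(i+1). -/
theorem quicksort_recurrence_bound (m : ℝ) (hm : 0 ≤ m) (t : ℕ → ℝ)
    (ht_nonneg : ∀ n, 0 ≤ t n) (h0 : t 0 = 0)
    (hrec : ∀ n : ℕ, 0 < n →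
      t n = m * n + (2 / n) * ∑ i ∈ Finset.range n, t i) :
    ∀ n : ℕ, t n ≤ (n + 1) * ∑ i ∈ Finset.Icc 1 n, 2 * m / (i + 1) := by
  intro n
  induction n using Nat.strong_induction_on with
  | _ n ih =>
    match n with
    | 0 => simp [h0]
    | Nat.succ k =>
      have hsum : ∑ i ∈ Finset.range (k+1), t i
          ≤ ((k:ℝ)+1)*((k:ℝ)+2)/2 * (∑ j ∈ Finset.Icc 1 k, 2*m/((j:ℝ)+1))
            - m*(k:ℝ)*((k:ℝ)+1)/2 := by
        rw [← quicksort_sum_B m k]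
        apply Finset.sum_le_sum
        intro i hi
        have := ih i (Finset.mem_range.mp hi)
        push_cast at this ⊢
        exact this
      have h2 : (0:ℝ) ≤ 2 / ((k:ℝ)+1) := by positivity
      calc t (k+1)
          = m * ((k:ℝ)+1) + (2/((k:ℝ)+1)) * ∑ i ∈ Finset.range (k+1), t i := by
            rw [hrec (k+1) (Nat.succ_pos k)]; push_cast; ring_nf
        _ ≤ m * ((k:ℝ)+1)
            + (2/((k:ℝ)+1)) * (((k:ℝ)+1)*((k:ℝ)+2)/2 * (∑ j ∈ Finset.Icc 1 k, 2*m/((j:ℝ)+1))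
              - m*(k:ℝ)*((k:ℝ)+1)/2) := by gcongr
        _ = ((k:ℝ)+2) * (∑ j ∈ Finset.Icc 1 k, 2*m/((j:ℝ)+1)) + m := by
            field_simp
            ring
        _ ≤ ((k:ℝ)+2) * (∑ j ∈ Finset.Icc 1 k, 2*m/((j:ℝ)+1)) + 2*m/(((k:ℝ)+1)+1) * ((k:ℝ)+2) := by
            have : m ≤ 2*m/(((k:ℝ)+1)+1) * ((k:ℝ)+2) := by
              rw [div_mul_eq_mul_div, le_div_iff₀ (by positivity)]
              nlinarith
            linarith
        _ = (((k:ℕ):ℝ)+1+1) * ∑ j ∈ Finset.Icc 1 (k+1), 2*m/((j:ℝ)+1) := by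
            rw [Finset.sum_Icc_succ_top (by omega : 1 ≤ k+1)]
            push_cast
            ring
        _ = ((k+1 : ℕ) + 1 : ℝ) * ∑ j ∈ Finset.Icc 1 (k+1), 2*m/((j:ℝ)+1) := by
            push_cast; ring
end

section
/- The meld-heap credit inequality: for t(n) defined by t(0) = 0 and t(n) = 2k(1 + log₂ n) for n > 0 (with constant k ≥ 0), and any natural numbers a, b, it holds that ((k + t(a)) + (k + t(b)))/2 ≤ t(1 + a + b). -/
/-- The meld-heap credit inequality: for t(0) = 0 and t(n) = 2k(1 + log₂ n) for
n > 0 (with k ≥ 0), ((k + t a) + (k + t b))/2 ≤ t (1 + a + b). -/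
theorem meld_credit_inequality (k : ℝ) (hk : 0 ≤ k) (t : ℕ → ℝ)
    (h0 : t 0 = 0)
    (hpos : ∀ n : ℕ, 0 < n → t n = 2 * k * (1 + Real.logb 2 n)) :
    ∀ a b : ℕ, ((k + t a) + (k + t b)) / 2 ≤ t (1 + a + b) := by
  intro a b
  rcases Nat.eq_zero_or_pos a with ha | ha <;> rcases Nat.eq_zero_or_pos b with hb | hb
  · subst ha; subst hb
    rw [h0, hpos 1 one_pos]
    simp [Real.logb_one]
    linarith
  · subst ha
    rw [h0, hpos b hb, hpos (1 + 0 + b) (by omega)]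
    have h1 : (1 : ℝ) ≤ (b : ℝ) := by exact_mod_cast hb
    have hlog : Real.logb 2 b ≤ Real.logb 2 (1 + 0 + b : ℕ) := by
      apply Real.logb_le_logb_of_le one_lt_two (by positivity)
      push_cast; linarith
    have hlog0 : 0 ≤ Real.logb 2 (1 + 0 + b : ℕ) := by
      apply Real.logb_nonneg one_lt_two; push_cast; linarith
    nlinarith
  · subst hb
    rw [h0, hpos a ha, hpos (1 + a + 0) (by omega)]
    have h1 : (1 : ℝ) ≤ (a : ℝ) := by exact_mod_cast ha
    have hlog : Real.logb 2 a ≤ Real.logb 2 (1 + a + 0 : ℕ) := by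
      apply Real.logb_le_logb_of_le one_lt_two (by positivity)
      push_cast; linarith
    have hlog0 : 0 ≤ Real.logb 2 (1 + a + 0 : ℕ) := by
      apply Real.logb_nonneg one_lt_two; push_cast; linarith
    nlinarith
  · rw [hpos a ha, hpos b hb, hpos (1 + a + b) (by omega)]
    have h1 : (1 : ℝ) ≤ (a : ℝ) := by exact_mod_cast ha
    have h2 : (1 : ℝ) ≤ (b : ℝ) := by exact_mod_cast hb
    have key : Real.logb 2 (2 * a * b : ℝ) ≤ Real.logb 2 (((1 + a + b : ℕ) : ℝ) ^ 2) := by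
      apply Real.logb_le_logb_of_le one_lt_two (by positivity)
      push_cast; nlinarith
    rw [Real.logb_mul (by positivity) (by positivity),
        Real.logb_mul (by norm_num) (by positivity),
        Real.logb_pow] at key
    have h2' : Real.logb 2 2 = 1 := Real.logb_self_eq_one one_lt_two
    rw [h2'] at key
    push_cast at key ⊢
    nlinarith
end

section
/- The entropy recurrence for quicksort, e(0) = 0 and e(n) = log₂(n) + (2/n)·∑_{i=0}^{n-1} e(i) for n > 0, is asymptotically linear: there exists a constant C such that e(n) ≤ C · n for all n. -/
/-!
Strong induction on the stronger bound `e n ≤ c (8 n - 2 log n)`, where `c = 1 / log 2`.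
Averaging the linear part `8 c i` over `i < n` loses only a constant, and the subtracted
`-2 c log i` terms, summed with Stirling's lower bound for `log n!`, more than pay for the
new `c log n`.
-/

open Finset Real
open scoped Nat

theorem sum_range_natCast (n : ℕ) : ∑ i ∈ range n, (i : ℝ) = n * (n - 1) / 2 := by
  induction n with
  | zero => simp
  | succ n ih => rw [sum_range_succ, ih]; push_cast; ring

theorem sum_range_log_eq_log_factorial_sub_log (n : ℕ) :
    ∑ i ∈ range n, log i = log n ! - log n := by
  induction n with
  | zero => simp
  | succ n ih =>
    rw [sum_range_succ, ih, Nat.factorial_succ, Nat.cast_mul,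
      log_mul (by positivity) (by positivity)]
    push_cast
    ring

theorem sub_one_mul_log_sub_le_sum_range_log {n : ℕ} (hn : n ≠ 0) :
    (n - 1) * log n - n ≤ ∑ i ∈ range n, log i := by
  have h2π : 0 ≤ log (2 * π) := log_nonneg (by linarith [pi_gt_three])
  have hstirling := Stirling.le_log_factorial_stirling hn
  rw [sum_range_log_eq_log_factorial_sub_log]
  linarith [log_natCast_nonneg n]

theorem sum_range_eight_mul_sub_two_mul_log_le {n : ℕ} (hn : n ≠ 0) :
    ∑ i ∈ range n, (8 * i - 2 * log i) ≤ 4 * n * (n - 1) - 2 * ((n - 1) * log n - n) := by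
  rw [sum_sub_distrib, ← mul_sum, ← mul_sum, sum_range_natCast]
  linarith [sub_one_mul_log_sub_le_sum_range_log hn]

theorem add_two_div_mul_le_eight_mul_sub {n l : ℝ} (hn : 0 < n) (hl : 0 ≤ l) (hln : l ≤ n) :
    l + 2 / n * (4 * n * (n - 1) - 2 * ((n - 1) * l - n)) ≤ 8 * n - 2 * l := by
  have hexpand : 2 / n * (4 * n * (n - 1) - 2 * ((n - 1) * l - n)) =
      8 * n - 4 - 4 * l + 4 * (l / n) := by
    field_simp
    ring
  have hratio : l / n ≤ 1 := div_le_one_of_le₀ hln hn.le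
  linarith

theorem le_mul_eight_mul_sub_two_mul_log_of_le_rec {c : ℝ} (hc : 0 ≤ c) {e : ℕ → ℝ}
    (h0 : e 0 ≤ 0)
    (hrec : ∀ n : ℕ, 0 < n → e n ≤ c * log n + 2 / n * ∑ i ∈ range n, e i)
    (n : ℕ) : e n ≤ c * (8 * n - 2 * log n) := by
  induction n using Nat.strong_induction_on with
  | _ n ih =>
  rcases Nat.eq_zero_or_pos n with rfl | hn
  · simpa using h0
  have hsum : ∑ i ∈ range n, e i ≤ c * (4 * n * (n - 1) - 2 * ((n - 1) * log n - n)) :=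
    calc ∑ i ∈ range n, e i ≤ ∑ i ∈ range n, c * (8 * i - 2 * log i) :=
          sum_le_sum fun i hi => ih i (mem_range.mp hi)
      _ ≤ _ := by
          rw [← mul_sum]
          exact mul_le_mul_of_nonneg_left (sum_range_eight_mul_sub_two_mul_log_le hn.ne') hc
  have hn' : (0 : ℝ) < n := by exact_mod_cast hn
  have hlog_le : log n ≤ n := (log_le_sub_one_of_pos hn').trans (by linarith)
  calc e n ≤ c * log n + 2 / n * ∑ i ∈ range n, e i := hrec n hn
    _ ≤ c * log n + 2 / n * (c * (4 * n * (n - 1) - 2 * ((n - 1) * log n - n))) := by gcongr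
    _ = c * (log n + 2 / n * (4 * n * (n - 1) - 2 * ((n - 1) * log n - n))) := by ring
    _ ≤ c * (8 * n - 2 * log n) := by
        gcongr
        exact add_two_div_mul_le_eight_mul_sub hn' (log_natCast_nonneg n) hlog_le

/-- The entropy recurrence for quicksort, e(0) = 0 and
e(n) = log₂ n + (2/n)·∑_{i<n} e(i) for n > 0, is asymptotically linear:
there is a constant C with e(n) ≤ C · n for all n. -/
theorem quicksort_entropy_linear (e : ℕ → ℝ)
    (h0 : e 0 = 0)
    (hrec : ∀ n : ℕ, 0 < n →
      e n = Real.logb 2 n + (2 / n) * ∑ i ∈ Finset.range n, e i) :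
    ∃ C : ℝ, ∀ n : ℕ, e n ≤ C * n := by
  have hlog2 : 0 < (log 2)⁻¹ := inv_pos.mpr (log_pos one_lt_two)
  have hbound := le_mul_eight_mul_sub_two_mul_log_of_le_rec hlog2.le h0.le
    fun n hn => (hrec n hn).trans_le (by rw [logb, div_eq_inv_mul])
  refine ⟨8 * (log 2)⁻¹, fun n => ?_⟩
  have hlog_n : 0 ≤ (log 2)⁻¹ * log n := mul_nonneg hlog2.le (log_natCast_nonneg n)
  linarith [hbound n]
end
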